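/- arXiv:2208.06944 — 3 statements merged into one kernel-verified Lean document; each statement's English description precedes it below -/
import Mathlib

section
/- Let α ∈ (0,1) be irrational with continued fraction denominators q_n. If k = l₁ q_n + l₂ with integers l₁, l₂ satisfying |l₁| ≤ q_{n+1}/(10 q_n) and 1 ≤ l₂ < q_n, then ‖kα‖_{ℝ/ℤ} ≥ 1/(4 q_n). -/
/-- Distance from a real number to the nearest integer, ‖x‖_{ℝ/ℤ}. -/
noncomputable def normZ (x : ℝ) : ℝ := |x - round x|

/-- The Gauss map. -/
noncomputable def cfGauss (x : ℝ) : ℝ := Int.fract x⁻¹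

/-- Partial quotients of α ∈ (0,1): `cfA α n` is the paper's a_{n+1}. -/
noncomputable def cfA (α : ℝ) (n : ℕ) : ℤ := ⌊(cfGauss^[n] α)⁻¹⌋

/-- Continued fraction denominators: q_0 = 1, q_1 = a_1, q_{n+2} = a_{n+2} q_{n+1} + q_n. -/
noncomputable def cfQ (α : ℝ) : ℕ → ℤ
  | 0 => 1
  | 1 => cfA α 0
  | (n + 2) => cfA α (n + 1) * cfQ α (n + 1) + cfQ α n

/-- Continued fraction numerators: p_0 = 0, p_1 = 1, p_{n+2} = a_{n+2} p_{n+1} + p_n. -/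
noncomputable def cfP (α : ℝ) : ℕ → ℤ
  | 0 => 0
  | 1 => 1
  | (n + 2) => cfA α (n + 1) * cfP α (n + 1) + cfP α n

/-!
Write `k α = l₂ α + l₁ (q_n α)`. Since `‖·‖_{ℝ/ℤ}` is subadditive and `‖m x‖ ≤ |m| ‖x‖` for integers `m`,
`‖k α‖ ≥ ‖l₂ α‖ - |l₁| ‖q_n α‖ ≥ 1/(2 q_n) - (q_{n+1}/(10 q_n)) (1/q_{n+1}) = 1/(2 q_n) - 1/(10 q_n) ≥ 1/(4 q_n)`.
-/

lemma normZ_le_abs_sub_int (x : ℝ) (m : ℤ) : normZ x ≤ |x - m| := round_le x m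

lemma normZ_nonneg (x : ℝ) : 0 ≤ normZ x := abs_nonneg _

lemma normZ_add_le (x y : ℝ) : normZ (x + y) ≤ normZ x + normZ y :=
  calc normZ (x + y) ≤ |x + y - ((round x + round y : ℤ) : ℝ)| := normZ_le_abs_sub_int _ _
    _ = |(x - round x) + (y - round y)| := by push_cast; ring_nf
    _ ≤ normZ x + normZ y := abs_add_le _ _

lemma normZ_int_mul_le (m : ℤ) (x : ℝ) : normZ (m * x) ≤ |(m : ℝ)| * normZ x :=
  calc normZ (m * x) ≤ |m * x - ((m * round x : ℤ) : ℝ)| := normZ_le_abs_sub_int _ _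
    _ = |(m : ℝ)| * normZ x := by rw [normZ, ← abs_mul]; push_cast; ring_nf

lemma normZ_sub_abs_mul_le_normZ_add_int_mul (x y : ℝ) (m : ℤ) :
    normZ x - |(m : ℝ)| * normZ y ≤ normZ (x + m * y) := by
  have hx : normZ x ≤ normZ (x + m * y) + normZ (-m * y) := by
    simpa using normZ_add_le (x + m * y) (-m * y)
  have hmy : normZ (-m * y) ≤ |(m : ℝ)| * normZ y := by
    simpa using normZ_int_mul_le (-m) y
  linarith

theorem stmt3_general (α : ℝ) (n : ℕ)
    (hup : normZ ((cfQ α n : ℝ) * α) ≤ 1 / (cfQ α (n + 1) : ℝ))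
    (hlow : ∀ l : ℤ, 1 ≤ l → l < cfQ α n →
      1 / (2 * (cfQ α n : ℝ)) ≤ normZ ((l : ℝ) * α))
    (k l₁ l₂ : ℤ) (hk : k = l₁ * cfQ α n + l₂)
    (hl₁ : |(l₁ : ℝ)| ≤ (cfQ α (n + 1) : ℝ) / (10 * (cfQ α n : ℝ)))
    (hl₂1 : 1 ≤ l₂) (hl₂2 : l₂ < cfQ α n) :
    1 / (4 * (cfQ α n : ℝ)) ≤ normZ ((k : ℝ) * α) := by
  have hq : (0 : ℝ) < cfQ α n := by exact_mod_cast (show (0 : ℤ) < cfQ α n by omega)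
  set q : ℝ := (cfQ α n : ℝ)
  set q' : ℝ := (cfQ α (n + 1) : ℝ)
  have hkα : (k : ℝ) * α = l₂ * α + l₁ * (q * α) := by rw [hk]; push_cast; ring
  have hsmall : |(l₁ : ℝ)| * normZ (q * α) ≤ 1 / (10 * q) :=
    calc |(l₁ : ℝ)| * normZ (q * α) ≤ q' / (10 * q) * (1 / q') :=
          mul_le_mul hl₁ hup (normZ_nonneg _) ((abs_nonneg _).trans hl₁)
      _ = q' * q'⁻¹ / (10 * q) := by ring
      _ ≤ 1 / (10 * q) := by gcongr; exact mul_inv_le_one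
  have hk_ge := normZ_sub_abs_mul_le_normZ_add_int_mul (l₂ * α) (q * α) l₁
  rw [← hkα] at hk_ge
  have hgap : 1 / (4 * q) ≤ 1 / (2 * q) - 1 / (10 * q) := by
    field_simp
    norm_num
  linarith [hlow l₂ hl₂1 hl₂2]

/-- small divisor estimate (5) of the Proposition. -/
theorem stmt3 (α : ℝ) (hα : Irrational α) (h0 : 0 < α) (h1 : α < 1) (n : ℕ)
    (hq : 2 ≤ cfQ α (n + 1))
    (hup : normZ ((cfQ α n : ℝ) * α) ≤ 1 / (cfQ α (n + 1) : ℝ))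
    (hlow : ∀ l : ℤ, 1 ≤ l → l < cfQ α n →
      1 / (2 * (cfQ α n : ℝ)) ≤ normZ ((l : ℝ) * α))
    (k l₁ l₂ : ℤ) (hk : k = l₁ * cfQ α n + l₂)
    (hl₁ : |(l₁ : ℝ)| ≤ (cfQ α (n + 1) : ℝ) / (10 * (cfQ α n : ℝ)))
    (hl₂1 : 1 ≤ l₂) (hl₂2 : l₂ < cfQ α n) :
    1 / (4 * (cfQ α n : ℝ)) ≤ normZ ((k : ℝ) * α) :=
  stmt3_general α n hup hlow k l₁ l₂ hk hl₁ hl₂1 hl₂2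
end

section
/- Let α be irrational with continued fraction denominators q_m and θ ∈ ℝ such that ‖2θ + k_j α‖_{ℝ/ℤ} ≤ 10η/q_{2j} for some integer k_j, with 0 < η ≤ 10⁻². Then for any k = k_j + l₁ q_{2j-1} + l₂ with integers l₁, l₂ satisfying |l₁| ≤ q_{2j}/(10 q_{2j-1}) and 1 ≤ l₂ < q_{2j-1}, one has ‖2θ + kα‖_{ℝ/ℤ} ≥ 1/(4 q_{2j-1}), provided η q_{2j} ≥ 10¹⁷ q_{2j-1}. -/
/-! Write `2θ + kα` as `(2θ + k_j α) + l₁ (q_{2j-1} α) + l₂ α`. The last summand is at distance at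
least `1/(2 q_{2j-1})` from the integers, while the first two are at distance at most
`10η/q_{2j} ≤ 3/(20 q_{2j-1})` (by the gap `η q_{2j} ≥ 10¹⁷ q_{2j-1}`) and
`|l₁| / q_{2j} ≤ 1/(10 q_{2j-1})`. Viewing `‖·‖_{ℝ/ℤ}` as the norm of `UnitAddCircle`, the triangle
inequality leaves `1/(2q) - 3/(20q) - 1/(10q) = 1/(4q)` with `q = q_{2j-1}`. -/

lemma normZ_eq_norm (x : ℝ) : normZ x = ‖(x : UnitAddCircle)‖ := UnitAddCircle.norm_eq.symm

lemma normZ_sub_normZ_sub_normZ_le (x y z : ℝ) :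
    normZ z - normZ x - normZ y ≤ normZ (x + y + z) := by
  simp only [normZ_eq_norm]
  have hz : ((z : ℝ) : UnitAddCircle) = ((x + y + z : ℝ) : UnitAddCircle) - x - y := by
    rw [← AddCircle.coe_sub, ← AddCircle.coe_sub]; congr 1; ring
  have := norm_sub_le (((x + y + z : ℝ) : UnitAddCircle) - x) (y : UnitAddCircle)
  have := norm_sub_le ((x + y + z : ℝ) : UnitAddCircle) (x : UnitAddCircle)
  rw [hz]; linarith

lemma quarter_le_normZ_add_add {q x y z : ℝ} (hq : 0 < q) (hx : normZ x ≤ 3 / (20 * q))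
    (hy : normZ y ≤ 1 / (10 * q)) (hz : 1 / (2 * q) ≤ normZ z) :
    1 / (4 * q) ≤ normZ (x + y + z) := by
  have hsplit : 1 / (4 * q) = 1 / (2 * q) - 3 / (20 * q) - 1 / (10 * q) := by
    field_simp; norm_num
  linarith [normZ_sub_normZ_sub_normZ_le x y z]

theorem stmt5_general (α θ η : ℝ)
    (hη0 : 0 < η) (hη1 : η ≤ 1 / 100) (j : ℕ) (kj : ℤ)
    (hθ : normZ (2 * θ + (kj : ℝ) * α) ≤ 10 * η / (cfQ α (2 * j) : ℝ))
    (hgap : 10 ^ 17 * (cfQ α (2 * j - 1) : ℝ) ≤ η * (cfQ α (2 * j) : ℝ))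
    (hqup : normZ ((cfQ α (2 * j - 1) : ℝ) * α) ≤ 1 / (cfQ α (2 * j) : ℝ))
    (hqlow : ∀ l : ℤ, 1 ≤ l → l < cfQ α (2 * j - 1) →
      1 / (2 * (cfQ α (2 * j - 1) : ℝ)) ≤ normZ ((l : ℝ) * α))
    (k l₁ l₂ : ℤ) (hk : k = kj + l₁ * cfQ α (2 * j - 1) + l₂)
    (hl₁ : |(l₁ : ℝ)| ≤ (cfQ α (2 * j) : ℝ) / (10 * (cfQ α (2 * j - 1) : ℝ)))
    (hl₂1 : 1 ≤ l₂) (hl₂2 : l₂ < cfQ α (2 * j - 1)) :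
    1 / (4 * (cfQ α (2 * j - 1) : ℝ)) ≤ normZ (2 * θ + (k : ℝ) * α) := by
  have hq : (0 : ℝ) < cfQ α (2 * j - 1) := by
    have : (0 : ℤ) < cfQ α (2 * j - 1) := by omega
    exact_mod_cast this
  set q : ℝ := (cfQ α (2 * j - 1) : ℝ)
  set Q : ℝ := (cfQ α (2 * j) : ℝ)
  have hQ : 0 < Q :=
    pos_of_mul_pos_right ((by positivity : (0 : ℝ) < 10 ^ 17 * q).trans_le hgap) hη0.le
  have hphase : 10 * η / Q ≤ 3 / (20 * q) := by
    rw [div_le_div_iff₀ hQ (by positivity)]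
    nlinarith [mul_le_mul_of_nonneg_right hη1 hQ.le]
  have hshift : normZ (l₁ * (q * α)) ≤ 1 / (10 * q) :=
    calc normZ (l₁ * (q * α)) ≤ |(l₁ : ℝ)| * normZ (q * α) := normZ_int_mul_le l₁ _
      _ ≤ Q / (10 * q) * (1 / Q) := by gcongr; exact abs_nonneg _
      _ = 1 / (10 * q) := by field_simp
  have hk' : 2 * θ + (k : ℝ) * α = (2 * θ + kj * α) + l₁ * (q * α) + l₂ * α := by
    rw [hk]; push_cast; ring
  rw [hk']
  exact quarter_le_normZ_add_add hq (hθ.trans hphase) hshift (hqlow l₂ hl₂1 hl₂2)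

/-- small divisor estimate (2) of the Proposition. -/
theorem stmt5 (α θ η : ℝ) (hα : Irrational α) (h0 : 0 < α) (h1 : α < 1)
    (hη0 : 0 < η) (hη1 : η ≤ 1 / 100) (j : ℕ) (hj : 1 ≤ j) (kj : ℤ)
    (hθ : normZ (2 * θ + (kj : ℝ) * α) ≤ 10 * η / (cfQ α (2 * j) : ℝ))
    (hgap : 10 ^ 17 * (cfQ α (2 * j - 1) : ℝ) ≤ η * (cfQ α (2 * j) : ℝ))
    (hqup : normZ ((cfQ α (2 * j - 1) : ℝ) * α) ≤ 1 / (cfQ α (2 * j) : ℝ))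
    (hqlow : ∀ l : ℤ, 1 ≤ l → l < cfQ α (2 * j - 1) →
      1 / (2 * (cfQ α (2 * j - 1) : ℝ)) ≤ normZ ((l : ℝ) * α))
    (k l₁ l₂ : ℤ) (hk : k = kj + l₁ * cfQ α (2 * j - 1) + l₂)
    (hl₁ : |(l₁ : ℝ)| ≤ (cfQ α (2 * j) : ℝ) / (10 * (cfQ α (2 * j - 1) : ℝ)))
    (hl₂1 : 1 ≤ l₂) (hl₂2 : l₂ < cfQ α (2 * j - 1)) :
    1 / (4 * (cfQ α (2 * j - 1) : ℝ)) ≤ normZ (2 * θ + (k : ℝ) * α) :=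
  stmt5_general α θ η hη0 hη1 j kj hθ hgap hqup hqlow k l₁ l₂ hk hl₁ hl₂1 hl₂2
end

section
/- Fix 0 < η ≤ 10⁻² and an irrational α whose continued fraction denominators satisfy η q_{2j+1} ≥ 10¹⁷ q_{2j} for all j ≥ j₀. Define k_{j₀} = k₀ (an integer with (−k₀α mod 1) ∈ [1/10, 1/5]) and inductively k_{j+1} = k_j + ⌊η q_{2j+1}/q_{2j}⌋ q_{2j}. Then for every j ≥ j₀, ((−k_{j+1}α) mod 1) − ((−k_j α) mod 1) lies in the interval [−η/q_{2j}, −η/(4 q_{2j})]. -/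
/-! Since `k_{j+1} - k_j = m q` with `m = ⌊η q'/q⌋` (`q = q_{2j}`, `q' = q_{2j+1}`), the fractional
part of `-k α` drops by `m (q α - p) ∈ [η/(4q), η/q]`, as long as it does not wrap around `0`.
It never does: it starts at `≥ 1/10`, and since `q_{2j}` at least doubles at each step, the total
decrease is at most `Σ η/q_{2j} ≤ 2η`. -/

theorem Int.fract_sub_add_intCast_of_le_fract {R : Type*} [Ring R] [LinearOrder R]
    [IsStrictOrderedRing R] [FloorRing R] {a d : R} (z : ℤ) (hd₀ : 0 ≤ d) (hd : d ≤ Int.fract a) :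
    Int.fract (a - d + z) = Int.fract a - d := by
  rw [Int.fract_add_intCast, Int.fract_eq_iff]
  refine ⟨sub_nonneg.2 hd, (sub_le_self _ hd₀).trans_lt (Int.fract_lt_one a), ⌊a⌋, ?_⟩
  rw [← Int.self_sub_floor]
  abel

theorem floor_div_mul_mem_Icc {η Q Q' β : ℝ} (hQ : 0 < Q) (hQQ' : Q ≤ Q')
    (hratio : 2 ≤ η * Q' / Q) (hβ₁ : 1 / (Q + Q') ≤ β) (hβ₂ : β ≤ 1 / Q') :
    (⌊η * Q' / Q⌋ : ℝ) * β ∈ Set.Icc (η / (4 * Q)) (η / Q) := by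
  set r := η * Q' / Q with hr
  have hQ' : 0 < Q' := hQ.trans_le hQQ'
  have hβ : 1 / (2 * Q') ≤ β :=
    (one_div_le_one_div_of_le (by positivity) (by linarith)).trans hβ₁
  have hfloor : r / 2 ≤ ⌊r⌋ := by linarith [Int.lt_floor_add_one r]
  constructor
  · calc η / (4 * Q) = r / 2 * (1 / (2 * Q')) := by rw [hr]; field_simp; ring
      _ ≤ ⌊r⌋ * β := mul_le_mul hfloor hβ (by positivity) (by linarith)
  · calc (⌊r⌋ : ℝ) * β ≤ r * (1 / Q') :=
          mul_le_mul (Int.floor_le r) hβ₂ ((by positivity : (0 : ℝ) < _).le.trans hβ) (by linarith)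
      _ = η / Q := by rw [hr]; field_simp

section Descent

variable {x d Q : ℕ → ℝ} {η c : ℝ} {j₀ : ℕ}

theorem fract_succ_sub_fract_eq_neg (hx : ∀ j ≥ j₀, ∃ z : ℤ, x (j + 1) = x j - d j + z)
    (hη : 0 ≤ η) (hd₀ : ∀ j ≥ j₀, 0 ≤ d j) (hd : ∀ j ≥ j₀, d j ≤ η / Q j)
    (hQ₁ : ∀ j ≥ j₀, 1 ≤ Q j) (hQ : ∀ j ≥ j₀, 2 * Q j ≤ Q (j + 1))
    (hc : c ≤ Int.fract (x j₀)) (hηc : 3 * η ≤ c) :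
    ∀ j ≥ j₀, Int.fract (x (j + 1)) - Int.fract (x j) = -d j := by
  have step : ∀ j ≥ j₀, η ≤ Int.fract (x j) →
      Int.fract (x (j + 1)) = Int.fract (x j) - d j := by
    intro j hj hxj
    obtain ⟨z, hz⟩ := hx j hj
    rw [hz]
    exact Int.fract_sub_add_intCast_of_le_fract z (hd₀ j hj)
      (((hd j hj).trans (div_le_self hη (hQ₁ j hj))).trans hxj)
  -- the invariant behind `Σ η / Q j ≤ 2 η`
  have invariant : ∀ j ≥ j₀, c - 2 * η + 2 * (η / Q j) ≤ Int.fract (x j) := by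
    intro j hj
    induction j, hj using Nat.le_induction with
    | base => linarith [div_le_self hη (hQ₁ j₀ le_rfl)]
    | succ j hj ih =>
      have hQj := hQ₁ j hj
      rw [step j hj (by linarith [div_nonneg hη (by linarith : 0 ≤ Q j)])]
      have : 2 * (η / Q (j + 1)) ≤ η / Q j := by
        rw [← mul_div_assoc, div_le_div_iff₀ (by linarith [hQ j hj]) (by linarith)]
        nlinarith [hQ j hj]
      linarith [hd j hj]
  intro j hj
  have hQj := hQ₁ j hj
  rw [step j hj (by linarith [invariant j hj, div_nonneg hη (by linarith : 0 ≤ Q j)])]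
  ring

end Descent

section ContinuedFraction

variable {α : ℝ}

theorem cfGauss_iterate_mem (hα : Irrational α) (h0 : 0 < α) (h1 : α < 1) (n : ℕ) :
    Irrational (cfGauss^[n] α) ∧ cfGauss^[n] α ∈ Set.Ioo 0 1 := by
  induction n with
  | zero => exact ⟨hα, h0, h1⟩
  | succ n ih =>
    obtain ⟨hirr, hpos, -⟩ := ih
    rw [Function.iterate_succ_apply']
    have hirr' : Irrational (Int.fract (cfGauss^[n] α)⁻¹) := hirr.inv.sub_intCast _
    exact ⟨hirr', Int.fract_pos.2 (hirr.inv.ne_int _), Int.fract_lt_one _⟩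

theorem one_le_cfA (hα : Irrational α) (h0 : 0 < α) (h1 : α < 1) (n : ℕ) : 1 ≤ cfA α n := by
  obtain ⟨-, hpos, hlt⟩ := cfGauss_iterate_mem hα h0 h1 n
  rw [cfA, Int.le_floor, Int.cast_one, le_inv_comm₀ one_pos hpos, inv_one]
  exact hlt.le

theorem one_le_cfQ_and_cfQ_le_succ (hα : Irrational α) (h0 : 0 < α) (h1 : α < 1) (n : ℕ) :
    1 ≤ cfQ α n ∧ cfQ α n ≤ cfQ α (n + 1) := by
  induction n with
  | zero => exact ⟨le_rfl, one_le_cfA hα h0 h1 0⟩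
  | succ n ih =>
    have hq : 1 ≤ cfQ α (n + 1) := ih.1.trans ih.2
    refine ⟨hq, ?_⟩
    change cfQ α (n + 1) ≤ cfA α (n + 1) * cfQ α (n + 1) + cfQ α n
    nlinarith [one_le_cfA hα h0 h1 (n + 1)]

end ContinuedFraction

/-- increments of the fractional parts along the constructed sequence k_j. -/
theorem stmt8 (α η : ℝ) (hα : Irrational α) (h0 : 0 < α) (h1 : α < 1)
    (hη0 : 0 < η) (hη1 : η ≤ 1 / 100) (j₀ : ℕ) (k₀ : ℤ) (k : ℕ → ℤ)
    (hk₀ : Int.fract (-(k₀ : ℝ) * α) ∈ Set.Icc (1 / 10 : ℝ) (1 / 5))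
    (hkinit : k j₀ = k₀)
    (hkrec : ∀ j, j₀ ≤ j →
      k (j + 1) = k j + ⌊η * (cfQ α (2 * j + 1) : ℝ) / (cfQ α (2 * j) : ℝ)⌋ * cfQ α (2 * j))
    (hgap : ∀ j, j₀ ≤ j → 10 ^ 17 * (cfQ α (2 * j) : ℝ) ≤ η * (cfQ α (2 * j + 1) : ℝ))
    (hconv1 : ∀ j, 1 / ((cfQ α (2 * j) : ℝ) + (cfQ α (2 * j + 1) : ℝ))
        ≤ (cfQ α (2 * j) : ℝ) * α - (cfP α (2 * j) : ℝ))
    (hconv2 : ∀ j, (cfQ α (2 * j) : ℝ) * α - (cfP α (2 * j) : ℝ)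
        ≤ 1 / (cfQ α (2 * j + 1) : ℝ)) :
    ∀ j, j₀ ≤ j →
      Int.fract (-(k (j + 1) : ℝ) * α) - Int.fract (-(k j : ℝ) * α)
        ∈ Set.Icc (-η / (cfQ α (2 * j) : ℝ)) (-η / (4 * (cfQ α (2 * j) : ℝ))) := by
  set q : ℕ → ℝ := fun n ↦ (cfQ α n : ℝ)
  set m : ℕ → ℤ := fun j ↦ ⌊η * q (2 * j + 1) / q (2 * j)⌋
  have hq₁ (n : ℕ) : 1 ≤ q n := by
    simp only [q]; exact_mod_cast (one_le_cfQ_and_cfQ_le_succ hα h0 h1 n).1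
  have hq₀ (n : ℕ) : 0 < q n := one_pos.trans_le (hq₁ n)
  have hq_succ (n : ℕ) : q n ≤ q (n + 1) := by
    simp only [q]; exact_mod_cast (one_le_cfQ_and_cfQ_le_succ hα h0 h1 n).2
  have hdouble (j : ℕ) (hj : j₀ ≤ j) : 2 * q (2 * j) ≤ q (2 * j + 1) := by
    nlinarith [hgap j hj, hq₁ (2 * j)]
  have hm (j : ℕ) (hj : j₀ ≤ j) : (m j : ℝ) * (q (2 * j) * α - cfP α (2 * j))
      ∈ Set.Icc (η / (4 * q (2 * j))) (η / q (2 * j)) := by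
    refine floor_div_mul_mem_Icc (hq₀ _) (by linarith [hdouble j hj, hq₀ (2 * j)]) ?_
      (hconv1 j) (hconv2 j)
    rw [le_div_iff₀ (hq₀ _)]
    nlinarith [hgap j hj, hq₁ (2 * j)]
  intro j hj
  rw [fract_succ_sub_fract_eq_neg (x := fun j ↦ -(k j : ℝ) * α) (Q := fun j ↦ q (2 * j))
    (d := fun j ↦ (m j : ℝ) * (q (2 * j) * α - cfP α (2 * j))) (c := 1 / 10) (j₀ := j₀)
    (fun j hj ↦ ⟨-(m j * cfP α (2 * j)), by rw [hkrec j hj]; push_cast; ring⟩) hη0.le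
    (fun j hj ↦ (div_pos hη0 (by linarith [hq₀ (2 * j)])).le.trans (hm j hj).1)
    (fun j hj ↦ (hm j hj).2) (fun j _ ↦ hq₁ (2 * j))
    (fun j hj ↦ (hdouble j hj).trans (hq_succ (2 * j + 1))) (hkinit ▸ hk₀.1) (by linarith) j hj]
  obtain ⟨hlo, hhi⟩ := hm j hj
  constructor <;> rw [neg_div] <;> linarith
end
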